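/- arXiv:2301.00605 — 3 statements merged into one kernel-verified Lean document; each statement's English description precedes it below -/
import Mathlib

section
/- Let U be a Banach space and K : U → U a bounded linear operator such that K² is compact. Then the operator I − K is Fredholm of index zero. -/
/-- A bounded linear operator is Fredholm of index zero: finite-dimensional kernel,
closed range, and the cokernel is finite-dimensional of the same dimension as the kernel. -/
def IsFredholmIndexZero {U V : Type*} [NormedAddCommGroup U] [NormedSpace ℝ U]
    [NormedAddCommGroup V] [NormedSpace ℝ V] (T : U →L[ℝ] V) : Prop :=
  FiniteDimensional ℝ (LinearMap.ker (T : U →ₗ[ℝ] V)) ∧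
  IsClosed (LinearMap.range (T : U →ₗ[ℝ] V) : Set V) ∧
  FiniteDimensional ℝ (V ⧸ LinearMap.range (T : U →ₗ[ℝ] V)) ∧
  Module.finrank ℝ (V ⧸ LinearMap.range (T : U →ₗ[ℝ] V)) = Module.finrank ℝ (LinearMap.ker (T : U →ₗ[ℝ] V))

/-! With `S = 1 + K`, the operator `T = 1 - K` commutes with `S` and `1 - S T = K²` is
compact. For such `T`, Riesz's lemma played against the compactness of `1 - S T` shows that
`ker T` is finite-dimensional, that `T` is bounded below on a closed complement of `ker T` (so
its range is closed), and that the chains `ker Tⁿ` and `range Tⁿ` stabilise, say from `p` on.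
Then `U = ker Tᵖ ⊕ range Tᵖ`, `T` maps `range Tᵖ` onto itself, and the cokernel of `T` is the
cokernel of its restriction to the finite-dimensional space `ker Tᵖ`, which by rank–nullity has
the dimension of `ker T`. -/

section Ring

open LinearMap Module

variable {R M : Type*} [Ring R] [AddCommGroup M] [Module R M]

theorem Module.End.range_pow_constant {f : End R M} {k : ℕ}
    (h : range (f ^ (k + 1)) = range (f ^ k)) : ∀ m, range (f ^ (k + m)) = range (f ^ k)
  | 0 => rfl
  | m + 1 => by
    rw [← range_pow_constant h m, show k + (m + 1) = m + (k + 1) by omega, add_comm k m,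
      pow_add f m (k + 1), pow_add f m k, End.mul_eq_comp, End.mul_eq_comp, range_comp,
      range_comp, h]

theorem Module.End.isCompl_ker_range_of_sq {g : End R M} (hker : ker (g ^ 2) = ker g)
    (hrange : range (g ^ 2) = range g) : IsCompl (ker g) (range g) := by
  refine ⟨Submodule.disjoint_def.mpr ?_, Submodule.codisjoint_iff_exists_add_eq.mpr fun x => ?_⟩
  · rintro - hx ⟨y, rfl⟩
    have hy : y ∈ ker (g ^ 2) := by simpa [sq] using hx
    simpa [hker] using hy
  · obtain ⟨z, hz⟩ : g x ∈ range (g ^ 2) := hrange ▸ mem_range_self g x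
    refine ⟨x - g z, g z, ?_, mem_range_self g z, sub_add_cancel x _⟩
    simp [← hz, sq]

end Ring

section DivisionRing

open LinearMap Module

variable {K V : Type*} [DivisionRing K] [AddCommGroup V] [Module K V]

theorem Module.End.exists_ker_pow_succ_eq_and_range_pow_succ_eq {f : End K V}
    (hker : ∃ n, ker (f ^ (n + 1)) = ker (f ^ n))
    (hrange : ∃ n, range (f ^ (n + 1)) = range (f ^ n)) :
    ∃ p, ker (f ^ (p + 1)) = ker (f ^ p) ∧ range (f ^ (p + 1)) = range (f ^ p) := by
  obtain ⟨n, hn⟩ := hker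
  obtain ⟨m, hm⟩ := hrange
  refine ⟨max n m, ?_, ?_⟩
  · obtain ⟨k, hk⟩ := Nat.exists_eq_add_of_le (le_max_left n m)
    rw [hk, add_assoc, ← ker_pow_constant hn.symm, ← ker_pow_constant hn.symm]
  · obtain ⟨k, hk⟩ := Nat.exists_eq_add_of_le (le_max_right n m)
    rw [hk, add_assoc, range_pow_constant hm, range_pow_constant hm]

theorem Module.End.finrank_quotient_range_eq_finrank_ker {f : End K V} {N W : Submodule K V}
    [FiniteDimensional K N] (hNW : IsCompl N W) (hfN : ∀ x ∈ N, f x ∈ N) (hfW : W.map f = W)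
    (hker : ker f ≤ N) :
    FiniteDimensional K (V ⧸ range f) ∧ finrank K (V ⧸ range f) = finrank K (ker f) := by
  let g := f.restrict hfN
  let φ := (range f).mkQ ∘ₗ N.subtype
  have hφ : range φ = ⊤ := by
    refine range_eq_top.mpr fun c => ?_
    obtain ⟨x, rfl⟩ := (range f).mkQ_surjective c
    obtain ⟨a, ha, b, hb, rfl⟩ :=
      Submodule.mem_sup.mp (hNW.sup_eq_top ▸ Submodule.mem_top (x := x))
    have hb' : b ∈ range f := by
      rw [← hfW] at hb
      obtain ⟨y, -, rfl⟩ := hb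
      exact mem_range_self f y
    refine ⟨⟨a, ha⟩, ?_⟩
    simpa [φ, Submodule.Quotient.eq] using hb'
  have hkerφ : ker φ = range g := by
    ext ⟨x, hx⟩
    simp only [φ, mem_ker, coe_comp, Function.comp_apply, Submodule.subtype_apply,
      Submodule.mkQ_apply, Submodule.Quotient.mk_eq_zero]
    constructor
    · rintro ⟨v, rfl⟩
      obtain ⟨a, ha, b, hb, rfl⟩ :=
        Submodule.mem_sup.mp (hNW.sup_eq_top ▸ Submodule.mem_top (x := v))
      have hfb : f b ∈ N := by simpa using N.sub_mem hx (hfN a ha)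
      have hfb' : f b ∈ W := hfW ▸ Submodule.mem_map_of_mem hb
      refine ⟨⟨a, ha⟩, Subtype.ext ?_⟩
      simp [g, Submodule.disjoint_def.mp hNW.disjoint _ hfb hfb']
    · rintro ⟨⟨a, ha⟩, h⟩
      exact ⟨a, congrArg Subtype.val h⟩
  have hkerg : ker g = (ker f).comap N.subtype := ker_restrict hfN
  have := Module.Finite.of_surjective φ (range_eq_top.mp hφ)
  refine ⟨this, ?_⟩
  have h1 := finrank_range_add_finrank_ker φ
  have h2 := finrank_range_add_finrank_ker g
  rw [hφ, finrank_top, hkerφ] at h1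
  rw [hkerg, (Submodule.comapSubtypeEquivOfLe hker).finrank_eq] at h2
  omega

theorem Module.End.finrank_quotient_range_eq_finrank_ker_of_pow {f : End K V} {p : ℕ}
    [FiniteDimensional K (ker (f ^ p))] (hker : ker (f ^ (p + 1)) = ker (f ^ p))
    (hrange : range (f ^ (p + 1)) = range (f ^ p)) :
    FiniteDimensional K (V ⧸ range f) ∧ finrank K (V ⧸ range f) = finrank K (ker f) := by
  refine finrank_quotient_range_eq_finrank_ker (N := ker (f ^ p)) (W := range (f ^ p)) ?_
    (fun x hx => ?_) ?_ ?_
  · refine isCompl_ker_range_of_sq ?_ ?_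
    · rw [← pow_mul, mul_two, ← ker_pow_constant hker.symm]
    · rw [← pow_mul, mul_two, range_pow_constant hrange]
  · rw [mem_ker, ← End.mul_apply, ← pow_succ, pow_succ', End.mul_apply, mem_ker.mp hx,
      map_zero]
  · rw [← range_comp, ← End.mul_eq_comp, ← pow_succ', hrange]
  · exact hker ▸ ker_le_ker_comp f (f ^ p)

end DivisionRing

section Compact

open Filter Topology Metric

variable {𝕜 E F : Type*} [RCLike 𝕜] [NormedAddCommGroup E] [NormedSpace 𝕜 E]
  [NormedAddCommGroup F] [NormedSpace 𝕜 F]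

theorem IsCompactOperator.exists_norm_sub_lt {C : E →L[𝕜] F} (hC : IsCompactOperator C)
    {x : ℕ → E} (hx : ∀ n, ‖x n‖ ≤ 1) {r : ℝ} (hr : 0 < r) :
    ∃ m n, m < n ∧ ‖C (x n) - C (x m)‖ < r := by
  have hmem n : C (x n) ∈ closure (C '' closedBall 0 1) :=
    subset_closure ⟨x n, mem_closedBall_zero_iff.mpr (hx n), rfl⟩
  obtain ⟨a, -, φ, hφ, hlim⟩ :=
    (hC.isCompact_closure_image_closedBall 1).tendsto_subseq hmem
  obtain ⟨N, hN⟩ := Metric.cauchySeq_iff'.mp hlim.cauchySeq r hr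
  exact ⟨φ N, φ (N + 1), hφ N.lt_succ_self,
    by simpa [dist_eq_norm] using hN (N + 1) N.le_succ⟩

theorem Submodule.exists_mem_norm_eq_one_le_norm_sub {V W : Submodule 𝕜 E}
    (hV : IsClosed (V : Set E)) (hVW : V < W) {r : ℝ} (hr : r < 1) :
    ∃ x ∈ W, ‖x‖ = 1 ∧ ∀ y ∈ V, r ≤ ‖x - y‖ := by
  obtain ⟨w, hwW, hwV⟩ := SetLike.exists_of_lt hVW
  obtain ⟨⟨x, hxW⟩, -, hx1, hx⟩ := riesz_lemma_of_lt_one (F := V.comap W.subtype)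
    (hV.preimage continuous_subtype_val) ⟨⟨w, hwW⟩, hwV⟩ hr
  exact ⟨x, hxW, hx1, fun y hy => hx ⟨y, hVW.le hy⟩ hy⟩

theorem IsCompactOperator.exists_succ_eq_of_monotone {C : E →L[𝕜] E} (hC : IsCompactOperator C)
    {W : ℕ → Submodule 𝕜 E} (hW : Monotone W) (hWc : ∀ n, IsClosed (W n : Set E))
    (hCW : ∀ n, ∀ x ∈ W (n + 1), x - C x ∈ W n) : ∃ n, W (n + 1) = W n := by
  by_contra! hne
  have hlt n : W n < W (n + 1) := (hW n.le_succ).lt_of_ne (hne n).symm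
  choose x hxW hx1 hfar using fun n =>
    Submodule.exists_mem_norm_eq_one_le_norm_sub (hWc n) (hlt n) (r := 1 / 2) (by norm_num)
  obtain ⟨m, n, hmn, hclose⟩ := hC.exists_norm_sub_lt (fun n => (hx1 n).le) one_half_pos
  have hCxm : C (x m) ∈ W n := by
    have := sub_mem (hxW m) (hW m.le_succ (hCW m _ (hxW m)))
    rw [sub_sub_cancel] at this
    exact hW hmn this
  have := hfar n _ (add_mem (hCW n _ (hxW n)) hCxm)
  rw [show x n - (x n - C (x n) + C (x m)) = C (x n) - C (x m) by abel] at this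
  linarith

theorem IsCompactOperator.exists_succ_eq_of_antitone {C : E →L[𝕜] E} (hC : IsCompactOperator C)
    {W : ℕ → Submodule 𝕜 E} (hW : Antitone W) (hWc : ∀ n, IsClosed (W n : Set E))
    (hCW : ∀ n, ∀ x ∈ W n, x - C x ∈ W (n + 1)) : ∃ n, W (n + 1) = W n := by
  by_contra! hne
  have hlt n : W (n + 1) < W n := (hW n.le_succ).lt_of_ne (hne n)
  choose x hxW hx1 hfar using fun n =>
    Submodule.exists_mem_norm_eq_one_le_norm_sub (hWc (n + 1)) (hlt n) (r := 1 / 2) (by norm_num)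
  obtain ⟨m, n, hmn, hclose⟩ := hC.exists_norm_sub_lt (fun n => (hx1 n).le) one_half_pos
  have hCxn : C (x n) ∈ W (m + 1) := by
    have := sub_mem (hxW n) (hW n.le_succ (hCW n _ (hxW n)))
    rw [sub_sub_cancel] at this
    exact hW hmn this
  have := hfar m _ (add_mem (hCW m _ (hxW m)) hCxn)
  rw [show x m - (x m - C (x m) + C (x n)) = -(C (x n) - C (x m)) by abel, norm_neg] at this
  linarith

theorem exists_norm_le_mul_norm_of_isCompactOperator_id_sub_comp {S : F →L[𝕜] E}
    {T : E →L[𝕜] F}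
    (hC : IsCompactOperator (ContinuousLinearMap.id 𝕜 E - S ∘L T)) {M : Submodule 𝕜 E}
    (hM : IsClosed (M : Set E)) (hMT : Disjoint M T.ker) :
    ∃ c > 0, ∀ x ∈ M, ‖x‖ ≤ c * ‖T x‖ := by
  by_contra! h
  have hu (n : ℕ) : ∃ u ∈ M, ‖u‖ = 1 ∧ ‖T u‖ < 1 / (n + 1) := by
    obtain ⟨x, hxM, hx⟩ := h (n + 1) (by positivity)
    have hx0 : x ≠ 0 := by rintro rfl; simp at hx
    refine ⟨(‖x‖⁻¹ : 𝕜) • x, M.smul_mem _ hxM, norm_smul_inv_norm hx0, ?_⟩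
    rw [map_smul, norm_smul, norm_inv, RCLike.norm_ofReal, abs_norm, lt_div_iff₀ (by positivity),
      mul_assoc, mul_comm ‖T x‖, inv_mul_lt_iff₀ (norm_pos_iff.mpr hx0), mul_one]
    exact hx
  choose u huM hu1 hTu using hu
  have hTu0 : Tendsto (fun n => T (u n)) atTop (𝓝 0) :=
    squeeze_zero_norm (fun n => (hTu n).le) tendsto_one_div_add_atTop_nhds_zero_nat
  obtain ⟨a, -, φ, hφ, hCu⟩ := (hC.isCompact_closure_image_closedBall 1).tendsto_subseq
    fun n => subset_closure ⟨u n, mem_closedBall_zero_iff.mpr (hu1 n).le, rfl⟩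
  have hTuφ := hTu0.comp hφ.tendsto_atTop
  -- `u = S (T u) + (u - S (T u))`, and the second summand converges along `φ`
  have hua : Tendsto (fun n => u (φ n)) atTop (𝓝 a) := by
    simpa using ((S.continuous.tendsto 0).comp hTuφ).add hCu
  have haM : a ∈ M := hM.mem_of_tendsto hua (.of_forall fun n => huM _)
  have haT : a ∈ T.ker := tendsto_nhds_unique ((T.continuous.tendsto a).comp hua) hTuφ
  have ha1 : ‖a‖ = 1 := tendsto_nhds_unique hua.norm (by simp [hu1])
  simp [Submodule.disjoint_def.mp hMT a haM haT] at ha1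

theorem IsCompactOperator.finiteDimensional_ker_one_sub {C : E →L[𝕜] E}
    (hC : IsCompactOperator C) : FiniteDimensional 𝕜 (1 - C).ker := by
  have hfix : ∀ x ∈ (1 - C).ker, C x = x := fun x hx =>
    (sub_eq_zero.mp (by simpa using hx)).symm
  have hmaps : ∀ x ∈ (1 - C).ker, (C : E →ₗ[𝕜] E) x ∈ (1 - C).ker := fun x hx => by
    simp [hfix x hx]
  have hid : ⇑((C : E →ₗ[𝕜] E).restrict hmaps) = id :=
    funext fun x => Subtype.ext (hfix x x.2)
  exact .of_isCompactOperator_id (hid ▸ hC.restrict hmaps (ContinuousLinearMap.isClosed_ker _))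

theorem finiteDimensional_ker_of_isCompactOperator_id_sub_comp {S : F →L[𝕜] E}
    {T : E →L[𝕜] F}
    (hC : IsCompactOperator (ContinuousLinearMap.id 𝕜 E - S ∘L T)) :
    FiniteDimensional 𝕜 T.ker := by
  have := hC.finiteDimensional_ker_one_sub
  refine Submodule.finiteDimensional_of_le
    (S₂ := (1 - (ContinuousLinearMap.id 𝕜 E - S ∘L T)).ker) fun x (hx : T x = 0) => ?_
  simp [hx]

theorem isClosed_range_of_isCompactOperator_id_sub_comp [CompleteSpace E] {S : F →L[𝕜] E}
    {T : E →L[𝕜] F} (hC : IsCompactOperator (ContinuousLinearMap.id 𝕜 E - S ∘L T)) :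
    IsClosed (T.range : Set F) := by
  have := finiteDimensional_ker_of_isCompactOperator_id_sub_comp hC
  obtain ⟨M, hM, hMT⟩ :=
    (Submodule.ClosedComplemented.of_finiteDimensional T.ker).exists_isClosed_isCompl
  obtain ⟨c, hc, hcM⟩ :=
    exists_norm_le_mul_norm_of_isCompactOperator_id_sub_comp hC hM hMT.disjoint.symm
  have : CompleteSpace M := hM.completeSpace_coe
  have hanti : AntilipschitzWith c.toNNReal (T ∘L M.subtypeL) :=
    AddMonoidHomClass.antilipschitz_of_bound _ fun x => by
      simpa [Real.coe_toNNReal c hc.le] using hcM x x.2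
  have hrange : (T.range : Set F) = Set.range (T ∘L M.subtypeL) := by
    rw [← Submodule.map_eq_range_iff.mpr hMT.codisjoint.symm, Submodule.map_coe,
      Set.image_eq_range]
    rfl
  exact hrange ▸ hanti.isClosed_range (T ∘L M.subtypeL).uniformContinuous

end Compact

section Riesz

open ContinuousLinearMap

variable {𝕜 E : Type*} [RCLike 𝕜] [NormedAddCommGroup E] [NormedSpace 𝕜 E]

theorem isCompactOperator_one_sub_pow_mul_pow {S T : E →L[𝕜] E} (hST : Commute S T)
    (hC : IsCompactOperator ((1 : E →L[𝕜] E) - S * T)) (n : ℕ) :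
    IsCompactOperator ((1 : E →L[𝕜] E) - S ^ n * T ^ n) := by
  rw [← hST.mul_pow, ← geom_sum_mul_neg]
  exact hC.clm_comp (∑ i ∈ Finset.range n, (S * T) ^ i)

theorem exists_ker_pow_succ_eq_of_isCompactOperator_one_sub_mul {S T : E →L[𝕜] E}
    (hST : Commute S T) (hC : IsCompactOperator ((1 : E →L[𝕜] E) - S * T)) :
    ∃ n, (T ^ (n + 1)).ker = (T ^ n).ker := by
  refine hC.exists_succ_eq_of_monotone (fun m n h => ?_) (fun n => isClosed_ker _)
    fun n x (hx : (T ^ (n + 1)) x = 0) => ?_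
  · simp only [toLinearMap_pow]
    exact (T : E →ₗ[𝕜] E).iterateKer.monotone h
  · change (T ^ n) (x - (1 - S * T) x) = 0
    rw [sub_apply, one_apply_eq_self, sub_sub_cancel]
    change (T ^ n * (S * T)) x = 0
    rw [← mul_assoc, ← (hST.pow_right n).eq, mul_assoc, ← pow_succ]
    exact congr(S $hx).trans (map_zero S)

theorem exists_range_pow_succ_eq_of_isCompactOperator_one_sub_mul [CompleteSpace E]
    {S T : E →L[𝕜] E}
    (hST : Commute S T) (hC : IsCompactOperator ((1 : E →L[𝕜] E) - S * T)) :
    ∃ n, (T ^ (n + 1)).range = (T ^ n).range := by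
  refine hC.exists_succ_eq_of_antitone (fun m n h => ?_)
    (fun n => isClosed_range_of_isCompactOperator_id_sub_comp
      (isCompactOperator_one_sub_pow_mul_pow hST hC n)) fun n x ⟨y, hy⟩ => ⟨S y, ?_⟩
  · simp only [toLinearMap_pow]
    exact (T : E →ₗ[𝕜] E).iterateRange.monotone h
  · subst hy
    change (T ^ (n + 1)) (S y) = _
    rw [sub_apply, one_apply_eq_self, sub_sub_cancel]
    change (T ^ (n + 1) * S) y = (S * T * T ^ n) y
    rw [mul_assoc, ← pow_succ', (hST.pow_right (n + 1)).eq]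

end Riesz

theorem isFredholmIndexZero_of_isCompactOperator_one_sub_mul {U : Type*} [NormedAddCommGroup U]
    [NormedSpace ℝ U] [CompleteSpace U] {S T : U →L[ℝ] U} (hST : Commute S T)
    (hC : IsCompactOperator ((1 : U →L[ℝ] U) - S * T)) : IsFredholmIndexZero T := by
  obtain ⟨p, hker, hrange⟩ := Module.End.exists_ker_pow_succ_eq_and_range_pow_succ_eq
    (f := (T : U →ₗ[ℝ] U))
    (by simpa only [ContinuousLinearMap.toLinearMap_pow] using
      exists_ker_pow_succ_eq_of_isCompactOperator_one_sub_mul hST hC)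
    (by simpa only [ContinuousLinearMap.toLinearMap_pow] using
      exists_range_pow_succ_eq_of_isCompactOperator_one_sub_mul hST hC)
  have : FiniteDimensional ℝ (LinearMap.ker ((T : U →ₗ[ℝ] U) ^ p)) := by
    rw [← ContinuousLinearMap.toLinearMap_pow]
    exact finiteDimensional_ker_of_isCompactOperator_id_sub_comp
      (isCompactOperator_one_sub_pow_mul_pow hST hC p)
  exact ⟨finiteDimensional_ker_of_isCompactOperator_id_sub_comp hC,
    isClosed_range_of_isCompactOperator_id_sub_comp hC,
    Module.End.finrank_quotient_range_eq_finrank_ker_of_pow hker hrange⟩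

/-- Nikolskii's criterion: if `K` is a bounded operator on a Banach space `U` such that
`K ∘ K` is compact, then `I - K` is Fredholm of index zero. -/
theorem nikolskii_fredholm {U : Type*} [NormedAddCommGroup U] [NormedSpace ℝ U]
    [CompleteSpace U] (K : U →L[ℝ] U) (hK2 : IsCompactOperator (K ∘L K)) :
    IsFredholmIndexZero (ContinuousLinearMap.id ℝ U - K) := by
  refine isFredholmIndexZero_of_isCompactOperator_one_sub_mul (S := 1 + K)
    ((Commute.one_right _).sub_right ((Commute.one_left K).add_left (Commute.refl K))) ?_
  convert hK2 using 2
  change (1 : U →L[ℝ] U) - (1 + K) * (1 - K) = K * K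
  noncomm_ring
end

section
/- Let d : ℝ×[0,1]³ → ℝ be continuous and 1-periodic in its first argument, and let η̂ : ℝ×[0,1]³ → ℝ be C¹ with ∂_y η̂(t,x,y,z) ≠ 0 for all arguments. Then the linear operator K defined by (Kv)(t,x) = ∫_0^x ∫_0^z d(t,x,y,z) v(η̂(t,x,y,z), z) dy dz is a compact operator from the Banach space of continuous functions on ℝ×[0,1] that are 1-periodic in t (with sup norm) into itself. -/
/-!
Substituting `u = η̂(t,x,y,z)` in the inner integral, which is legitimate because `y ↦ η̂` is
strictly monotone, turns it into `∫_{η̂(t,x,0,z)}^{η̂(t,x,z,z)} Ψ(t,x,u,z) v(u,z) du`, where the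
continuous kernel `Ψ` is `d / ∂_y η̂` transported along the substitution (and extended to all of
`ℝ⁴` by Tietze). Now `(t,x)` enters only through the limits and through the continuous kernel, so
`{K v : ‖v‖ ≤ M}` is equicontinuous on `[0,1]²`, and Arzelà–Ascoli gives a subsequence of `K vₙ`
converging uniformly there. Periodicity in `t` carries the uniform convergence to `ℝ × [0,1]`.
-/

open Set Function Filter intervalIntegral Topology

theorem norm_intervalIntegral_sub_intervalIntegral_le {E : Type*} [NormedAddCommGroup E]
    [NormedSpace ℝ E] {g g' : ℝ → E} {s : Set ℝ} [s.OrdConnected] {a b a' b' C δ : ℝ}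
    (hg : ContinuousOn g s) (hg' : ContinuousOn g' s) (ha : a ∈ s) (hb : b ∈ s) (ha' : a' ∈ s)
    (hb' : b' ∈ s) (hC : ∀ u ∈ s, ‖g u‖ ≤ C) (hδ : ∀ u ∈ s, ‖g u - g' u‖ ≤ δ) :
    ‖(∫ u in a..b, g u) - ∫ u in a'..b', g' u‖ ≤ C * (|a - a'| + |b - b'|) + δ * |b' - a'| := by
  have hint : ∀ {f : ℝ → E}, ContinuousOn f s → ∀ {c c'}, c ∈ s → c' ∈ s →
      IntervalIntegrable f MeasureTheory.volume c c' := fun hf _ _ hc hc' =>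
    (hf.mono (OrdConnected.uIcc_subset ‹_› hc hc')).intervalIntegrable
  have hbound : ∀ {f : ℝ → E} {K c c'}, c ∈ s → c' ∈ s → (∀ u ∈ s, ‖f u‖ ≤ K) →
      ‖∫ u in c..c', f u‖ ≤ K * |c' - c| := fun hc hc' hf =>
    norm_integral_le_of_norm_le_const fun u hu =>
      hf u (OrdConnected.uIcc_subset ‹_› hc hc' (uIoc_subset_uIcc hu))
  have hsplit : (∫ u in a..b, g u) - ∫ u in a'..b', g' u =
      (∫ u in a..a', g u) + (∫ u in b'..b, g u) + ∫ u in a'..b', (g u - g' u) := by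
    rw [integral_sub (hint hg ha' hb') (hint hg' ha' hb'),
      ← integral_add_adjacent_intervals (hint hg ha ha') (hint hg ha' hb),
      ← integral_add_adjacent_intervals (hint hg ha' hb') (hint hg hb' hb)]
    abel
  rw [hsplit]
  calc _ ≤ ‖∫ u in a..a', g u‖ + ‖∫ u in b'..b, g u‖ + ‖∫ u in a'..b', (g u - g' u)‖ :=
        norm_add₃_le
    _ ≤ C * |a' - a| + C * |b - b'| + δ * |b' - a'| := by
        gcongr
        exacts [hbound ha ha' hC, hbound hb' hb hC, hbound ha' hb' hδ]
    _ = _ := by rw [abs_sub_comm a' a]; ring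

theorem norm_integral_le_of_forall_mem_Icc {E : Type*} [NormedAddCommGroup E] [NormedSpace ℝ E]
    {f : ℝ → E} {K z : ℝ} (hz : z ∈ Icc (0:ℝ) 1) (hf : ∀ u ∈ Icc (0:ℝ) 1, ‖f u‖ ≤ K) :
    ‖∫ u in (0:ℝ)..z, f u‖ ≤ K := by
  have hK : 0 ≤ K := (norm_nonneg _).trans (hf 0 (left_mem_Icc.2 zero_le_one))
  calc ‖∫ u in (0:ℝ)..z, f u‖ ≤ K * |z - 0| := norm_integral_le_of_norm_le_const fun u hu => by
        rw [uIoc_of_le hz.1] at hu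
        exact hf u ⟨hu.1.le, hu.2.trans hz.2⟩
    _ ≤ K * 1 := by
        rw [sub_zero, abs_of_nonneg hz.1]
        exact mul_le_mul_of_nonneg_left hz.2 hK
    _ = K := mul_one K

theorem integral_mul_comp_eq_of_eq_mul_deriv {a b : ℝ} {φ φ' k Ψ f : ℝ → ℝ}
    (hφ : ∀ y ∈ uIcc a b, HasDerivAt φ (φ' y) y) (hφ' : ContinuousOn φ' (uIcc a b))
    (hΨ : Continuous Ψ) (hf : Continuous f) (hk : ∀ y ∈ uIcc a b, k y = Ψ (φ y) * φ' y) :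
    ∫ y in a..b, k y * f (φ y) = ∫ u in φ a..φ b, Ψ u * f u := by
  rw [← integral_comp_mul_deriv (g := fun u => Ψ u * f u) hφ hφ' (hΨ.mul hf)]
  refine integral_congr fun y hy => ?_
  simp only [comp_apply, hk y hy]
  ring

theorem injective_of_hasDerivAt_ne_zero {f f' : ℝ → ℝ} (hf : ∀ x, HasDerivAt f (f' x) x)
    (hf' : ∀ x, f' x ≠ 0) : Injective f := by
  rcases hasDerivWithinAt_forall_lt_or_forall_gt_of_forall_ne convex_univ
    (fun x _ => (hf x).hasDerivWithinAt) (fun x _ => hf' x) with h | h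
  · exact (strictAnti_of_hasDerivAt_neg hf fun x => h x (mem_univ x)).injective
  · exact (strictMono_of_hasDerivAt_pos hf fun x => h x (mem_univ x)).injective

theorem exists_continuous_comp_eq_of_injOn {X Y : Type*} [TopologicalSpace X]
    [TopologicalSpace Y] [T2Space Y] [NormalSpace Y] {K : Set X} (hK : IsCompact K)
    {Θ : X → Y} (hΘ : ContinuousOn Θ K) (hinj : InjOn Θ K) {f : X → ℝ} (hf : ContinuousOn f K) :
    ∃ g : Y → ℝ, Continuous g ∧ ∀ x ∈ K, g (Θ x) = f x := by
  have : CompactSpace K := isCompact_iff_compactSpace.mp hK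
  obtain ⟨g, hg⟩ := ContinuousMap.exists_extension
    (hΘ.domRestrict.isClosedEmbedding hinj.injective) ⟨K.domRestrict f, hf.domRestrict⟩
  exact ⟨g, g.continuous, fun x hx => congr($hg ⟨x, hx⟩)⟩

theorem IsCompact.eventually_forall_dist_lt {X Y E : Type*} [TopologicalSpace X]
    [TopologicalSpace Y] [PseudoMetricSpace E] {f : X → Y → E} {k : Set Y} (hk : IsCompact k)
    (hf : Continuous (uncurry f)) (x₀ : X) {δ : ℝ} (hδ : 0 < δ) :
    ∀ᶠ x in 𝓝 x₀, ∀ y ∈ k, dist (f x y) (f x₀ y) < δ := by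
  obtain ⟨U, hU, hUk⟩ := hk.mem_uniformity_of_prod hf.continuousOn (mem_univ x₀)
    (Metric.dist_mem_uniformity hδ)
  rw [nhdsWithin_univ] at hU
  exact eventually_of_mem hU hUk

theorem eventually_norm_integral_kernel_sub_lt {P : Type*} [TopologicalSpace P] {S : Set P}
    (hS : IsCompact S) {Z : Set ℝ} (hZ : IsCompact Z) {Ψ : P → ℝ → ℝ → ℝ}
    (hΨ : Continuous fun q : P × ℝ × ℝ => Ψ q.1 q.2.1 q.2.2) {a b : P → ℝ → ℝ}
    (ha : Continuous (uncurry a)) (hb : Continuous (uncurry b)) (M : ℝ) {p₀ : P} (hp₀ : p₀ ∈ S)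
    {ε : ℝ} (hε : 0 < ε) :
    ∀ᶠ p in 𝓝[S] p₀, ∀ z ∈ Z, ∀ f : ℝ → ℝ, Continuous f → (∀ u, ‖f u‖ ≤ M) →
      ‖(∫ u in a p z..b p z, Ψ p u z * f u) - ∫ u in a p₀ z..b p₀ z, Ψ p₀ u z * f u‖ < ε := by
  obtain ⟨B, hB⟩ : ∃ B, ∀ p ∈ S, ∀ z ∈ Z, a p z ∈ Icc (-B) B ∧ b p z ∈ Icc (-B) B := by
    obtain ⟨Ba, hBa⟩ := (hS.prod hZ).exists_bound_of_continuousOn ha.continuousOn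
    obtain ⟨Bb, hBb⟩ := (hS.prod hZ).exists_bound_of_continuousOn hb.continuousOn
    exact ⟨max Ba Bb, fun p hp z hz =>
      ⟨abs_le.mp ((hBa (p, z) ⟨hp, hz⟩).trans (le_max_left _ _)),
        abs_le.mp ((hBb (p, z) ⟨hp, hz⟩).trans (le_max_right _ _))⟩⟩
  obtain ⟨C, hC⟩ := (hS.prod (isCompact_Icc.prod hZ)).exists_bound_of_continuousOn
    (s := S ×ˢ Icc (-B) B ×ˢ Z) hΨ.continuousOn
  obtain ⟨δ, hδ, hδε⟩ := exists_pos_mul_lt hε |2 * M * (C + B)|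
  filter_upwards [self_mem_nhdsWithin,
    nhdsWithin_le_nhds (hZ.eventually_forall_dist_lt ha p₀ hδ),
    nhdsWithin_le_nhds (hZ.eventually_forall_dist_lt hb p₀ hδ),
    nhdsWithin_le_nhds ((isCompact_Icc.prod hZ).eventually_forall_dist_lt
      (f := fun p uz => Ψ p uz.1 uz.2) (by fun_prop) p₀ hδ)]
    with p hp hap hbp hΨp z hz f hf hfM
  have hM : 0 ≤ M := (norm_nonneg _).trans (hfM 0)
  have hC0 : 0 ≤ C := (norm_nonneg _).trans (hC (p, a p z, z) ⟨hp, (hB p hp z hz).1, hz⟩)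
  obtain ⟨ha₀, hb₀⟩ := hB p₀ hp₀ z hz
  calc _ ≤ C * M * (|a p z - a p₀ z| + |b p z - b p₀ z|) + δ * M * |b p₀ z - a p₀ z| :=
      norm_intervalIntegral_sub_intervalIntegral_le (s := Icc (-B) B) (by fun_prop) (by fun_prop)
        (hB p hp z hz).1 (hB p hp z hz).2 ha₀ hb₀
        (fun u hu => by
          rw [norm_mul]
          exact mul_le_mul (hC (p, u, z) ⟨hp, hu, hz⟩) (hfM u) (norm_nonneg _) hC0)
        (fun u hu => by
          rw [← sub_mul, norm_mul]
          exact mul_le_mul (hΨp (u, z) ⟨hu, hz⟩).le (hfM u) (norm_nonneg _) hδ.le)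
    _ ≤ C * M * (δ + δ) + δ * M * (B + B) :=
      add_le_add (mul_le_mul_of_nonneg_left (add_le_add (hap z hz).le (hbp z hz).le)
        (mul_nonneg hC0 hM)) (mul_le_mul_of_nonneg_left (abs_sub_le_iff.mpr
          ⟨by linarith [ha₀.1, hb₀.2], by linarith [ha₀.2, hb₀.1]⟩) (mul_nonneg hδ.le hM))
    _ = δ * (2 * M * (C + B)) := by ring
    _ ≤ δ * |2 * M * (C + B)| := mul_le_mul_of_nonneg_left (le_abs_self _) hδ.le
    _ < ε := by linarith

theorem IsCompact.exists_subseq_uniformCauchySeqOn {X β : Type*} [TopologicalSpace X]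
    [MetricSpace β] {K : Set X} (hK : IsCompact K) {s : Set β} (hs : IsCompact s)
    {F : ℕ → X → β} (hc : ∀ n, ContinuousOn (F n) K) (hmem : ∀ n, ∀ x ∈ K, F n x ∈ s)
    (he : EquicontinuousOn F K) :
    ∃ φ : ℕ → ℕ, StrictMono φ ∧ UniformCauchySeqOn (fun n => F (φ n)) atTop K := by
  have : CompactSpace K := isCompact_iff_compactSpace.mp hK
  let G : ℕ → BoundedContinuousFunction K β := fun n =>
    BoundedContinuousFunction.mkOfCompact ⟨K.domRestrict (F n), (hc n).domRestrict⟩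
  have hG : Equicontinuous ((↑) : range G → K → β) := by
    have h := ((equicontinuous_restrict_iff F).mpr he).comp (rangeSplitting G)
    convert h using 1
    ext g : 1
    exact congrArg DFunLike.coe (apply_rangeSplitting G g).symm
  obtain ⟨g, -, φ, hφ, hlim⟩ := (BoundedContinuousFunction.arzela_ascoli s hs (range G)
    (by rintro _ x ⟨n, rfl⟩; exact hmem n x x.2) hG).isSeqCompact
    fun n => subset_closure (mem_range_self n)
  refine ⟨φ, hφ, Metric.uniformCauchySeqOn_iff.mpr fun ε hε => ?_⟩
  obtain ⟨N, hN⟩ := Metric.cauchySeq_iff.mp hlim.cauchySeq ε hε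
  exact ⟨N, fun m hm n hn x hx =>
    (BoundedContinuousFunction.dist_coe_le_dist ⟨x, hx⟩).trans_lt (hN m hm n hn)⟩

theorem UniformCauchySeqOn.exists_continuous_periodic_tendstoUniformlyOn {β : Type*}
    [MetricSpace β] [CompleteSpace β] {F : ℕ → ℝ × ℝ → β} (hF : ∀ n, Continuous (F n))
    (hper : ∀ n x, Periodic (fun t => F n (t, x)) 1)
    (hcauchy : UniformCauchySeqOn F atTop (Icc (0:ℝ) 1 ×ˢ Icc (0:ℝ) 1)) :
    ∃ w : ℝ × ℝ → β, Continuous w ∧ (∀ x, Periodic (fun t => w (t, x)) 1) ∧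
      TendstoUniformlyOn F w atTop (univ ×ˢ Icc 0 1) := by
  -- Clamping `x` to `[0,1]` gives a limit continuous on all of `ℝ × ℝ`.
  set G : ℕ → ℝ × ℝ → β := fun n p => F n (p.1, projIcc 0 1 zero_le_one p.2)
  have hGcauchy : UniformCauchySeqOn G atTop univ := by
    let κ : ℝ × ℝ → ℝ × ℝ := fun p => (Int.fract p.1, projIcc 0 1 zero_le_one p.2)
    have hκ : κ ⁻¹' (Icc (0:ℝ) 1 ×ˢ Icc (0:ℝ) 1) = univ := eq_univ_of_forall fun p =>
      ⟨⟨Int.fract_nonneg p.1, (Int.fract_lt_one p.1).le⟩, Subtype.prop _⟩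
    have h := hcauchy.comp κ
    rw [hκ] at h
    convert h using 2 with n
    ext p
    exact ((hper n _).sub_int_mul_eq ⌊p.1⌋).symm.trans (by rw [mul_one]; rfl)
  choose w hw using fun p => cauchySeq_tendsto_of_complete (hGcauchy.cauchySeq (mem_univ p))
  have hGw : TendstoUniformly G w atTop :=
    tendstoUniformlyOn_univ.mp (hGcauchy.tendstoUniformlyOn_of_tendsto fun p _ => hw p)
  refine ⟨w, hGw.continuous (Frequently.of_forall fun n => (hF n).comp (by fun_prop)),
    fun x t => ?_, hGw.tendstoUniformlyOn.congr (Eventually.of_forall fun n p hp => ?_)⟩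
  · have hGper : ∀ n, G n (t + 1, x) = G n (t, x) := fun n => hper n _ t
    exact tendsto_nhds_unique (by simpa only [hGper] using hw (t + 1, x)) (hw (t, x))
  · simp [G, projIcc_of_mem _ hp.2]

-- Reducible, so that `fun_prop` can use hypotheses of the form `Continuous (uncurry₄ f)`.
abbrev uncurry₄ (f : ℝ → ℝ → ℝ → ℝ → ℝ) (q : ℝ × ℝ × ℝ × ℝ) : ℝ := f q.1 q.2.1 q.2.2.1 q.2.2.2

abbrev unitCube : Set (ℝ × ℝ × ℝ × ℝ) := Icc 0 1 ×ˢ Icc 0 1 ×ˢ Icc 0 1 ×ˢ Icc 0 1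

theorem isCompact_unitCube : IsCompact unitCube :=
  isCompact_Icc.prod (isCompact_Icc.prod (isCompact_Icc.prod isCompact_Icc))

theorem ContDiff.exists_continuous_hasDerivAt_uncurry₄ {f : ℝ → ℝ → ℝ → ℝ → ℝ}
    (hf : ContDiff ℝ 1 (uncurry₄ f)) :
    ∃ D : ℝ × ℝ × ℝ × ℝ → ℝ, Continuous D ∧
      ∀ t x y z, HasDerivAt (fun y' => f t x y' z) (D (t, x, y, z)) y := by
  refine ⟨fun q => fderiv ℝ (uncurry₄ f) q (0, 0, 1, 0),
    (hf.continuous_fderiv one_ne_zero).clm_apply continuous_const, fun t x y z => ?_⟩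
  have hline : HasDerivAt (fun y' : ℝ => ((t, x, y', z) : ℝ × ℝ × ℝ × ℝ)) (0, 0, 1, 0) y :=
    (hasDerivAt_const y t).prodMk ((hasDerivAt_const y x).prodMk
      ((hasDerivAt_id y).prodMk (hasDerivAt_const y z)))
  exact ((hf.differentiable one_ne_zero) _).hasFDerivAt.comp_hasDerivAt y hline

noncomputable def innerIntegral (d η : ℝ → ℝ → ℝ → ℝ → ℝ) (v : ℝ → ℝ → ℝ) (p : ℝ × ℝ)
    (z : ℝ) : ℝ :=
  ∫ y in (0:ℝ)..z, d p.1 p.2 y z * v (η p.1 p.2 y z) z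

noncomputable def integralOp (d η : ℝ → ℝ → ℝ → ℝ → ℝ) (v : ℝ → ℝ → ℝ) (p : ℝ × ℝ) : ℝ :=
  ∫ z in (0:ℝ)..p.2, innerIntegral d η v p z

section IntegralOp

variable {d η : ℝ → ℝ → ℝ → ℝ → ℝ}

theorem continuous_innerIntegral {v : ℝ → ℝ → ℝ} (hd : Continuous (uncurry₄ d))
    (hη : Continuous (uncurry₄ η)) (hv : Continuous (uncurry v)) :
    Continuous (uncurry (innerIntegral d η v)) :=
  continuous_parametric_intervalIntegral_of_continuous
    (f := fun (q : (ℝ × ℝ) × ℝ) y => d q.1.1 q.1.2 y q.2 * v (η q.1.1 q.1.2 y q.2) q.2)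
    (by fun_prop) continuous_snd

theorem continuous_integralOp {v : ℝ → ℝ → ℝ} (hd : Continuous (uncurry₄ d))
    (hη : Continuous (uncurry₄ η)) (hv : Continuous (uncurry v)) :
    Continuous (integralOp d η v) :=
  continuous_parametric_intervalIntegral_of_continuous (continuous_innerIntegral hd hη hv)
    continuous_snd

theorem integralOp_periodic {v : ℝ → ℝ → ℝ} (hd : ∀ t x y z, d (t + 1) x y z = d t x y z)
    (hη : ∀ t x y z, η (t + 1) x y z = η t x y z + 1) (hv : ∀ t x, v (t + 1) x = v t x)
    (x : ℝ) : Periodic (fun t => integralOp d η v (t, x)) 1 := fun t => by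
  simp only [integralOp, innerIntegral, hd, hη, hv]

theorem norm_innerIntegral_le {v : ℝ → ℝ → ℝ} {Cd M : ℝ}
    (hd : ∀ q ∈ unitCube, ‖uncurry₄ d q‖ ≤ Cd) (hv : ∀ t, ∀ x ∈ Icc (0:ℝ) 1, ‖v t x‖ ≤ M)
    {p : ℝ × ℝ} (hp : p ∈ Icc (0:ℝ) 1 ×ˢ Icc (0:ℝ) 1) {z : ℝ} (hz : z ∈ Icc (0:ℝ) 1) :
    ‖innerIntegral d η v p z‖ ≤ Cd * M :=
  norm_integral_le_of_forall_mem_Icc hz fun y hy => by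
    have hdy := hd (p.1, p.2, y, z) ⟨hp.1, hp.2, hy, hz⟩
    rw [norm_mul]
    exact mul_le_mul hdy (hv _ z hz) (norm_nonneg _) ((norm_nonneg _).trans hdy)

theorem norm_integralOp_le {v : ℝ → ℝ → ℝ} {Cd M : ℝ}
    (hd : ∀ q ∈ unitCube, ‖uncurry₄ d q‖ ≤ Cd) (hv : ∀ t, ∀ x ∈ Icc (0:ℝ) 1, ‖v t x‖ ≤ M)
    {p : ℝ × ℝ} (hp : p ∈ Icc (0:ℝ) 1 ×ˢ Icc (0:ℝ) 1) :
    ‖integralOp d η v p‖ ≤ Cd * M :=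
  norm_integral_le_of_forall_mem_Icc hp.2 fun _ hz => norm_innerIntegral_le hd hv hp hz

theorem exists_innerIntegral_eq_integral_kernel (hd : Continuous (uncurry₄ d))
    (hη : ContDiff ℝ 1 (uncurry₄ η)) (hηy : ∀ t x y z, deriv (fun y' => η t x y' z) y ≠ 0) :
    ∃ Ψ : ℝ × ℝ × ℝ × ℝ → ℝ, Continuous Ψ ∧ ∀ v : ℝ → ℝ → ℝ, Continuous (uncurry v) →
      ∀ p ∈ Icc (0:ℝ) 1 ×ˢ Icc (0:ℝ) 1, ∀ z ∈ Icc (0:ℝ) 1, innerIntegral d η v p z =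
        ∫ u in η p.1 p.2 0 z..η p.1 p.2 z z, Ψ (p.1, p.2, u, z) * v u z := by
  obtain ⟨D, hDc, hD⟩ := hη.exists_continuous_hasDerivAt_uncurry₄
  have hD0 : ∀ q, D q ≠ 0 := fun ⟨t, x, y, z⟩ => (hD t x y z).deriv ▸ hηy t x y z
  let Θ : ℝ × ℝ × ℝ × ℝ → ℝ × ℝ × ℝ × ℝ := fun q => (q.1, q.2.1, uncurry₄ η q, q.2.2.2)
  have hΘinj : Injective Θ := by
    rintro ⟨t, x, y, z⟩ ⟨t', x', y', z'⟩ h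
    simp only [Θ, uncurry₄, Prod.mk.injEq] at h
    obtain ⟨rfl, rfl, h, rfl⟩ := h
    rw [injective_of_hasDerivAt_ne_zero (hD t x · z) (fun _ => hD0 _) h]
  obtain ⟨Ψ, hΨc, hΨ⟩ := exists_continuous_comp_eq_of_injOn isCompact_unitCube
    (by fun_prop : Continuous Θ).continuousOn hΘinj.injOn (hd.div hDc hD0).continuousOn
  refine ⟨Ψ, hΨc, fun v hv p hp z hz => ?_⟩
  refine integral_mul_comp_eq_of_eq_mul_deriv (k := fun y => d p.1 p.2 y z)
    (Ψ := fun u => Ψ (p.1, p.2, u, z)) (f := fun u => v u z) (fun y _ => hD p.1 p.2 y z)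
    (by fun_prop) (by fun_prop) (by fun_prop) fun y hy => ?_
  rw [uIcc_of_le hz.1] at hy
  have h := hΨ (p.1, p.2, y, z) ⟨hp.1, hp.2, ⟨hy.1, hy.2.trans hz.2⟩, hz⟩
  rw [Pi.div_apply, eq_div_iff (hD0 _)] at h
  exact h.symm

theorem equicontinuousOn_innerIntegral {ι : Type*} (hd : Continuous (uncurry₄ d))
    (hη : ContDiff ℝ 1 (uncurry₄ η)) (hηy : ∀ t x y z, deriv (fun y' => η t x y' z) y ≠ 0)
    {v : ι → ℝ → ℝ → ℝ} (hv : ∀ i, Continuous (uncurry (v i))) {M : ℝ}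
    (hM : ∀ i t, ∀ x ∈ Icc (0:ℝ) 1, ‖v i t x‖ ≤ M) :
    EquicontinuousOn (fun iz : ι × Icc (0:ℝ) 1 => fun p => innerIntegral d η (v iz.1) p iz.2)
      (Icc (0:ℝ) 1 ×ˢ Icc (0:ℝ) 1) := by
  obtain ⟨Ψ, hΨc, hΨ⟩ := exists_innerIntegral_eq_integral_kernel hd hη hηy
  have hηc : Continuous (uncurry₄ η) := hη.continuous
  intro p₀ hp₀
  rw [Metric.uniformity_basis_dist.equicontinuousWithinAt_iff_right]
  intro ε hε
  filter_upwards [self_mem_nhdsWithin, eventually_norm_integral_kernel_sub_lt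
    (isCompact_Icc.prod isCompact_Icc) isCompact_Icc (Ψ := fun p u z => Ψ (p.1, p.2, u, z))
    (a := fun p z => η p.1 p.2 0 z) (b := fun p z => η p.1 p.2 z z) (by fun_prop)
    (by fun_prop) (by fun_prop) M hp₀ hε] with p hp hclose
  rintro ⟨i, z, hz⟩
  rw [dist_comm, hΨ (v i) (hv i) p hp z hz, hΨ (v i) (hv i) p₀ hp₀ z hz, dist_eq_norm]
  exact hclose z hz (v i · z) (by fun_prop) fun u => hM i u z hz

theorem equicontinuousOn_integralOp {ι : Type*} (hd : Continuous (uncurry₄ d))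
    (hη : ContDiff ℝ 1 (uncurry₄ η)) (hηy : ∀ t x y z, deriv (fun y' => η t x y' z) y ≠ 0)
    {v : ι → ℝ → ℝ → ℝ} (hv : ∀ i, Continuous (uncurry (v i))) {M : ℝ}
    (hM : ∀ i t, ∀ x ∈ Icc (0:ℝ) 1, ‖v i t x‖ ≤ M) :
    EquicontinuousOn (fun i => integralOp d η (v i)) (Icc (0:ℝ) 1 ×ˢ Icc (0:ℝ) 1) := by
  obtain ⟨Cd, hCd⟩ := isCompact_unitCube.exists_bound_of_continuousOn hd.continuousOn
  intro p₀ hp₀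
  have hinner := equicontinuousOn_innerIntegral hd hη hηy hv hM p₀ hp₀
  rw [Metric.uniformity_basis_dist.equicontinuousWithinAt_iff_right] at hinner ⊢
  intro ε hε
  obtain ⟨δ, hδ, hδε⟩ := exists_pos_mul_lt hε (|Cd * M| + 1)
  filter_upwards [self_mem_nhdsWithin, hinner δ hδ,
    nhdsWithin_le_nhds ((continuous_snd.tendsto p₀).eventually (Metric.ball_mem_nhds _ hδ))]
    with p hp hclose hx i
  have hCdM : 0 ≤ Cd * M := (norm_nonneg _).trans
    (norm_innerIntegral_le (η := η) hCd (hM i) hp (left_mem_Icc.2 zero_le_one))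
  have hcont : ∀ q : ℝ × ℝ, ContinuousOn (innerIntegral d η (v i) q) (Icc 0 1) := fun q =>
    ((continuous_innerIntegral hd hη.continuous (hv i)).comp
      (Continuous.prodMk_right q)).continuousOn
  rw [dist_comm, dist_eq_norm]
  calc ‖integralOp d η (v i) p - integralOp d η (v i) p₀‖
      ≤ Cd * M * (|0 - 0| + |p.2 - p₀.2|) + δ * |p₀.2 - 0| :=
        norm_intervalIntegral_sub_intervalIntegral_le (s := Icc 0 1) (hcont p) (hcont p₀)
          (left_mem_Icc.2 zero_le_one) hp.2 (left_mem_Icc.2 zero_le_one) hp₀.2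
          (fun z hz => norm_innerIntegral_le hCd (hM i) hp hz)
          (fun z hz => by rw [← dist_eq_norm, dist_comm]; exact (hclose (i, ⟨z, hz⟩)).le)
    _ ≤ Cd * M * δ + δ * 1 := by
        rw [sub_self, abs_zero, zero_add, sub_zero, abs_of_nonneg hp₀.2.1]
        exact add_le_add (mul_le_mul_of_nonneg_left (Real.dist_eq _ _ ▸ hx).le
          hCdM) (mul_le_mul_of_nonneg_left hp₀.2.2 hδ.le)
    _ ≤ (|Cd * M| + 1) * δ := by nlinarith [le_abs_self (Cd * M)]
    _ < ε := hδε

end IntegralOp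

/-- Compactness (in the Arzelà–Ascoli sense) of the integral operator
`(Kv)(t,x) = ∫₀ˣ ∫₀ᶻ d(t,x,y,z) v(η̂(t,x,y,z), z) dy dz` on the space of continuous
functions on `ℝ × [0,1]` that are `1`-periodic in `t` (with the sup norm): every bounded
sequence `vₙ` in that space has a subsequence such that `K vₙ` converges uniformly on
`ℝ × [0,1]` to an element of the space. -/
theorem integral_operator_compact
    (d : ℝ → ℝ → ℝ → ℝ → ℝ) (η : ℝ → ℝ → ℝ → ℝ → ℝ)
    (hd : Continuous fun p : ℝ × ℝ × ℝ × ℝ => d p.1 p.2.1 p.2.2.1 p.2.2.2)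
    (hdper : ∀ t x y z, d (t + 1) x y z = d t x y z)
    (hη : ContDiff ℝ 1 fun p : ℝ × ℝ × ℝ × ℝ => η p.1 p.2.1 p.2.2.1 p.2.2.2)
    (hηy : ∀ t x y z, deriv (fun y' => η t x y' z) y ≠ 0)
    (hηper : ∀ t x y z, η (t + 1) x y z = η t x y z + 1) :
    ∀ v : ℕ → ℝ → ℝ → ℝ,
      (∀ n, Continuous (uncurry (v n))) →
      (∀ n t x, v n (t + 1) x = v n t x) →
      (∃ M, ∀ n t, ∀ x ∈ Icc (0:ℝ) 1, |v n t x| ≤ M) →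
      ∃ (φ : ℕ → ℕ) (w : ℝ → ℝ → ℝ), StrictMono φ ∧
        Continuous (uncurry w) ∧ (∀ t x, w (t + 1) x = w t x) ∧
        TendstoUniformlyOn
          (fun n (p : ℝ × ℝ) =>
            ∫ z in (0:ℝ)..p.2, ∫ y in (0:ℝ)..z, d p.1 p.2 y z * v (φ n) (η p.1 p.2 y z) z)
          (uncurry w) atTop (univ ×ˢ Icc 0 1) := by
  rintro v hv hvper ⟨M, hM⟩
  obtain ⟨Cd, hCd⟩ := isCompact_unitCube.exists_bound_of_continuousOn hd.continuousOn
  obtain ⟨φ, hφ, hcauchy⟩ := (isCompact_Icc.prod isCompact_Icc).exists_subseq_uniformCauchySeqOn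
    (isCompact_closedBall (0:ℝ) (Cd * M))
    (fun n => (continuous_integralOp hd hη.continuous (hv n)).continuousOn)
    (fun n p hp => mem_closedBall_zero_iff.mpr (norm_integralOp_le hCd (hM n) hp))
    (equicontinuousOn_integralOp hd hη hηy hv hM)
  obtain ⟨w, hwc, hwper, hw⟩ := hcauchy.exists_continuous_periodic_tendstoUniformlyOn
    (fun n => continuous_integralOp hd hη.continuous (hv (φ n)))
    (fun n => integralOp_periodic hdper hηper (hvper (φ n)))
  exact ⟨φ, curry w, hφ, hwc, fun t x => hwper x t, hw⟩
end

section
/- Let a₁ ∈ C([0,1]) be nowhere vanishing, α₁(x,y) = ∫_x^y dz/a₁(z), and let g ∈ C(ℝ×[0,1]) be 1-periodic in t. For any continuous 1-periodic (in t) functions u and v on ℝ×[0,1], define w(t,x) = ∫_0^x (v(t+α₁(x,y),y)/a₁(y)) · exp(∫_y^x g(t+α₁(x,z),z)/a₁(z) dz) dy. If u, v, g are C¹, then w is C¹ and satisfies ∂_t w(t,x) + a₁(x) ∂_x w(t,x) = v(t,x) + g(t,x) w(t,x) and w(t,0) = 0. -/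
open Function intervalIntegral Set ContinuousLinearMap

/-! With `A x = ∫₀ˣ dz / a₁ z` one has `α₁(x, y) = A y - A x`, so in the characteristic coordinate
`s = t - A x` the function `w` becomes `W s x = ∫₀ˣ f s y · exp (∫_yˣ k s z dz) dy` with
`k s z = g (s + A z) z / a₁ z` and `f s y = v (s + A y) y / a₁ y`. For fixed `s` this is the
variation-of-constants solution of `∂ₓW = k W + f`, `W s 0 = 0`, and along the characteristics
`s = const` the transport operator `∂ₜ + a₁ ∂ₓ` acts as `a₁ ∂ₓ`; multiplying `∂ₓW = k W + f` by `a₁`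
gives the equation. For the regularity, `W = exp (∫₀ˣ k) · ∫₀ˣ f exp (-∫₀ʸ k)`, and
`(s, x) ↦ ∫₀ˣ F s u du` is `C¹` as soon as `F` and `∂ₛF` are jointly continuous. -/

structure HasContinuousPartialDerivFst (F F' : ℝ → ℝ → ℝ) : Prop where
  continuous : Continuous (uncurry F)
  continuous_partialDeriv : Continuous (uncurry F')
  hasDerivAt : ∀ s u, HasDerivAt (F · u) (F' s u) s

namespace HasContinuousPartialDerivFst

variable {F F' G G' : ℝ → ℝ → ℝ}

theorem of_contDiff {f : ℝ → ℝ → ℝ} (hf : ContDiff ℝ 1 (uncurry f)) :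
    HasContinuousPartialDerivFst f fun s u => fderiv ℝ (uncurry f) (s, u) (1, 0) where
  continuous := hf.continuous
  continuous_partialDeriv := (hf.continuous_fderiv one_ne_zero).clm_apply continuous_const
  hasDerivAt s u := by
    have hline : HasDerivAt (fun t => (t, u)) ((1 : ℝ), (0 : ℝ)) s :=
      (hasDerivAt_id s).prodMk (hasDerivAt_const s u)
    exact (hf.differentiable one_ne_zero (s, u)).hasFDerivAt.comp_hasDerivAt s hline

theorem comp_add (h : HasContinuousPartialDerivFst F F') {A : ℝ → ℝ} (hA : Continuous A) :
    HasContinuousPartialDerivFst (fun s u => F (s + A u) u) (fun s u => F' (s + A u) u) := by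
  have hshear : Continuous fun p : ℝ × ℝ => (p.1 + A p.2, p.2) := by fun_prop
  refine ⟨h.continuous.comp hshear, h.continuous_partialDeriv.comp hshear, fun s u => ?_⟩
  exact (h.hasDerivAt (s + A u) u).comp_add_const s (A u)

theorem div (h : HasContinuousPartialDerivFst F F') {c : ℝ → ℝ} (hc : Continuous c)
    (hc0 : ∀ u, c u ≠ 0) :
    HasContinuousPartialDerivFst (fun s u => F s u / c u) (fun s u => F' s u / c u) :=
  ⟨h.continuous.div (hc.comp continuous_snd) fun p => hc0 p.2,
    h.continuous_partialDeriv.div (hc.comp continuous_snd) fun p => hc0 p.2,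
    fun s u => (h.hasDerivAt s u).div_const (c u)⟩

theorem neg (h : HasContinuousPartialDerivFst F F') :
    HasContinuousPartialDerivFst (fun s u => -F s u) (fun s u => -F' s u) :=
  ⟨h.continuous.neg, h.continuous_partialDeriv.neg, fun s u => (h.hasDerivAt s u).neg⟩

theorem exp (h : HasContinuousPartialDerivFst F F') :
    HasContinuousPartialDerivFst (fun s u => Real.exp (F s u))
      (fun s u => Real.exp (F s u) * F' s u) :=
  ⟨h.continuous.rexp, h.continuous.rexp.mul h.continuous_partialDeriv,
    fun s u => (h.hasDerivAt s u).exp⟩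

theorem mul (hF : HasContinuousPartialDerivFst F F') (hG : HasContinuousPartialDerivFst G G') :
    HasContinuousPartialDerivFst (fun s u => F s u * G s u)
      (fun s u => F' s u * G s u + F s u * G' s u) :=
  ⟨hF.continuous.mul hG.continuous,
    (hF.continuous_partialDeriv.mul hG.continuous).add
      (hF.continuous.mul hG.continuous_partialDeriv),
    fun s u => (hF.hasDerivAt s u).mul (hG.hasDerivAt s u)⟩

theorem hasDerivAt_intervalIntegral (h : HasContinuousPartialDerivFst F F') (a b s₀ : ℝ) :
    HasDerivAt (fun s => ∫ u in a..b, F s u) (∫ u in a..b, F' s₀ u) s₀ := by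
  obtain ⟨C, hC⟩ := (isCompact_Icc.prod isCompact_uIcc : IsCompact
    (Icc (s₀ - 1) (s₀ + 1) ×ˢ uIcc a b)).exists_bound_of_continuousOn
      h.continuous_partialDeriv.continuousOn
  refine (hasDerivAt_integral_of_dominated_loc_of_deriv_le (bound := fun _ => C)
    (Metric.ball_mem_nhds s₀ one_pos)
    (.of_forall fun s => (h.continuous.uncurry_left s).aestronglyMeasurable.restrict)
    ((h.continuous.uncurry_left s₀).intervalIntegrable _ _)
    (h.continuous_partialDeriv.uncurry_left s₀).aestronglyMeasurable.restrict ?_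
    intervalIntegrable_const (.of_forall fun u _ s _ => h.hasDerivAt s u)).2
  refine .of_forall fun u hu s hs => hC (s, u) ⟨?_, uIoc_subset_uIcc hu⟩
  rw [Real.ball_eq_Ioo] at hs
  exact Ioo_subset_Icc_self hs

theorem intervalIntegral (h : HasContinuousPartialDerivFst F F') (a : ℝ) :
    HasContinuousPartialDerivFst (fun s x => ∫ u in a..x, F s u)
      (fun s x => ∫ u in a..x, F' s u) :=
  ⟨continuous_parametric_primitive_of_continuous h.continuous,
    continuous_parametric_primitive_of_continuous h.continuous_partialDeriv,
    fun s x => h.hasDerivAt_intervalIntegral a x s⟩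

theorem contDiff_intervalIntegral (h : HasContinuousPartialDerivFst F F') (a : ℝ) :
    ContDiff ℝ 1 (uncurry fun s x => ∫ u in a..x, F s u) := by
  set f₁ : ℝ → ℝ → ℝ →L[ℝ] ℝ := fun s x => toSpanSingleton ℝ (∫ u in a..x, F' s u)
  set f₂ : ℝ → ℝ → ℝ →L[ℝ] ℝ := fun s x => toSpanSingleton ℝ (F s x)
  have cf₁ : Continuous (uncurry f₁) :=
    toSpanSingletonCLE.continuous.comp (h.intervalIntegral a).continuous_partialDeriv
  have cf₂ : Continuous (uncurry f₂) := toSpanSingletonCLE.continuous.comp h.continuous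
  rw [contDiff_one_iff_hasFDerivAt]
  refine ⟨fun p => (uncurry f₁ p).comp (fst ℝ ℝ ℝ) + (uncurry f₂ p).comp (snd ℝ ℝ ℝ),
    (cf₁.clm_comp continuous_const).add (cf₂.clm_comp continuous_const), fun p => ?_⟩
  refine (hasStrictFDerivAt_uncurry_coprod (f := fun s x => ∫ u in a..x, F s u) (u := p)
    (f₁ := f₁) (f₂ := f₂) (.of_forall fun q => ?_) (.of_forall fun q => ?_)
    cf₁.continuousAt cf₂.continuousAt).hasFDerivAt
  · exact ((h.intervalIntegral a).hasDerivAt q.1 q.2).hasFDerivAt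
  · exact ((h.continuous.uncurry_left q.1).integral_hasStrictDerivAt a q.2).hasDerivAt
      |>.hasFDerivAt

end HasContinuousPartialDerivFst

noncomputable def duhamel (k f : ℝ → ℝ) (x : ℝ) : ℝ :=
  ∫ y in (0 : ℝ)..x, f y * Real.exp (∫ z in y..x, k z)

section Duhamel

variable {k f : ℝ → ℝ}

theorem duhamel_eq_exp_mul (hk : Continuous k) (f : ℝ → ℝ) (x : ℝ) :
    duhamel k f x = Real.exp (∫ z in (0 : ℝ)..x, k z) *
      ∫ y in (0 : ℝ)..x, f y * Real.exp (-∫ z in (0 : ℝ)..y, k z) := by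
  rw [duhamel, ← intervalIntegral.integral_const_mul]
  refine integral_congr fun y _ => ?_
  rw [← integral_interval_sub_left (hk.intervalIntegrable 0 x) (hk.intervalIntegrable 0 y),
    sub_eq_add_neg, Real.exp_add]
  ring

theorem hasDerivAt_duhamel (hk : Continuous k) (hf : Continuous f) (x : ℝ) :
    HasDerivAt (duhamel k f) (k x * duhamel k f x + f x) x := by
  have hK : ∀ x, HasDerivAt (fun x => ∫ z in (0 : ℝ)..x, k z) (k x) x :=
    fun x => (hk.integral_hasStrictDerivAt 0 x).hasDerivAt
  have hKc : Continuous fun x => ∫ z in (0 : ℝ)..x, k z :=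
    continuous_iff_continuousAt.2 fun x => (hK x).continuousAt
  have hI : HasDerivAt (fun x => ∫ y in (0 : ℝ)..x, f y * Real.exp (-∫ z in (0 : ℝ)..y, k z))
      (f x * Real.exp (-∫ z in (0 : ℝ)..x, k z)) x :=
    ((hf.mul hKc.neg.rexp).integral_hasStrictDerivAt 0 x).hasDerivAt
  rw [show duhamel k f = _ from funext (duhamel_eq_exp_mul hk f)]
  refine ((hK x).exp.mul hI).congr_deriv ?_
  rw [Real.exp_neg]
  field_simp

theorem contDiff_duhamel {k k' f f' : ℝ → ℝ → ℝ} (hk : HasContinuousPartialDerivFst k k')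
    (hf : HasContinuousPartialDerivFst f f') :
    ContDiff ℝ 1 (uncurry fun s x => duhamel (k s) (f s) x) := by
  simp only [duhamel_eq_exp_mul (hk.continuous.uncurry_left _)]
  exact (hk.contDiff_intervalIntegral 0).exp.mul
    ((hf.mul (hk.intervalIntegral 0).neg.exp).contDiff_intervalIntegral 0)

end Duhamel

theorem deriv_add_mul_deriv_comp_characteristic {Φ : ℝ → ℝ → ℝ} {A : ℝ → ℝ} {c t x : ℝ}
    (hΦ : DifferentiableAt ℝ (uncurry Φ) (t - A x, x)) (hA : HasDerivAt A c⁻¹ x) (hc : c ≠ 0) :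
    deriv (fun s => Φ (s - A x) x) t + c * deriv (fun y => Φ (t - A y) y) x =
      c * deriv (Φ (t - A x)) x := by
  set L := fderiv ℝ (uncurry Φ) (t - A x, x)
  have hL := hΦ.hasFDerivAt
  have ht : HasDerivAt (fun s => Φ (s - A x) x) (L (1, 0)) t :=
    hL.comp_hasDerivAt (f := fun s => (s - A x, x)) t
      (((hasDerivAt_id t).sub_const (A x)).prodMk (hasDerivAt_const t x))
  have hx : HasDerivAt (fun y => Φ (t - A y) y) (L (-c⁻¹, 1)) x :=
    hL.comp_hasDerivAt (f := fun y => (t - A y, y)) x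
      (((hasDerivAt_const x t).sub hA).prodMk (hasDerivAt_id x) |>.congr_deriv (by simp))
  have hx' : HasDerivAt (Φ (t - A x)) (L (0, 1)) x :=
    hL.comp_hasDerivAt (f := fun y => (t - A x, y)) x
      ((hasDerivAt_const x (t - A x)).prodMk (hasDerivAt_id x))
  have hsplit : ((-c⁻¹, 1) : ℝ × ℝ) = -c⁻¹ • ((1, 0) : ℝ × ℝ) + (0, 1) := by simp
  rw [ht.deriv, hx.deriv, hx'.deriv, hsplit, map_add, map_smul, smul_eq_mul]
  field_simp
  ring

theorem D_right_inverse_transport_general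
    (a1 : ℝ → ℝ) (ha : Continuous a1) (ha0 : ∀ x, a1 x ≠ 0)
    (g v : ℝ → ℝ → ℝ)
    (hg : ContDiff ℝ 1 (uncurry g))
    (hv : ContDiff ℝ 1 (uncurry v))
    (w : ℝ → ℝ → ℝ)
    (hw : ∀ t x, w t x =
      ∫ y in (0:ℝ)..x, (v (t + ∫ z in x..y, (a1 z)⁻¹) y / a1 y) *
        Real.exp (∫ z in y..x, g (t + ∫ z' in x..z, (a1 z')⁻¹) z / a1 z)) :
    ContDiff ℝ 1 (uncurry w) ∧
    (∀ t x, deriv (fun s => w s x) t + a1 x * deriv (fun y => w t y) x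
      = v t x + g t x * w t x) ∧
    (∀ t, w t 0 = 0) := by
  have hinv : Continuous fun z => (a1 z)⁻¹ := ha.inv₀ ha0
  set A : ℝ → ℝ := fun x => ∫ z in (0 : ℝ)..x, (a1 z)⁻¹
  have hA : ∀ x, HasDerivAt A (a1 x)⁻¹ x :=
    fun x => (hinv.integral_hasStrictDerivAt 0 x).hasDerivAt
  have hAc : ContDiff ℝ 1 A := contDiff_one_iff_deriv.2 ⟨fun x => (hA x).differentiableAt,
    by rwa [show deriv A = _ from funext fun x => (hA x).deriv]⟩
  set k : ℝ → ℝ → ℝ := fun s z => g (s + A z) z / a1 z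
  set f : ℝ → ℝ → ℝ := fun s y => v (s + A y) y / a1 y
  have hk := ((HasContinuousPartialDerivFst.of_contDiff hg).comp_add hAc.continuous).div ha ha0
  have hf := ((HasContinuousPartialDerivFst.of_contDiff hv).comp_add hAc.continuous).div ha ha0
  set W : ℝ → ℝ → ℝ := fun s x => duhamel (k s) (f s) x
  have hW : ContDiff ℝ 1 (uncurry W) := contDiff_duhamel hk hf
  have hwW : ∀ t x, w t x = W (t - A x) x := by
    intro t x
    have hα : ∀ y, ∫ z in x..y, (a1 z)⁻¹ = A y - A x := fun y =>
      (integral_interval_sub_left (hinv.intervalIntegrable _ _) (hinv.intervalIntegrable _ _)).symm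
    simp only [hw, hα, W, duhamel, k, f, show ∀ y, t + (A y - A x) = t - A x + A y from
      fun y => by ring]
  refine ⟨?_, fun t x => ?_, fun t => by simp [hw]⟩
  · have : uncurry w = uncurry W ∘ fun p => (p.1 - A p.2, p.2) := funext fun p => hwW p.1 p.2
    rw [this]
    exact hW.comp ((contDiff_fst.sub (hAc.comp contDiff_snd)).prodMk contDiff_snd)
  · simp only [hwW]
    rw [deriv_add_mul_deriv_comp_characteristic (hW.differentiable one_ne_zero _) (hA x) (ha0 x),
      (hasDerivAt_duhamel (k := k (t - A x)) (f := f (t - A x))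
      (hk.continuous.uncurry_left _) (hf.continuous.uncurry_left _) x).deriv]
    simp only [k, f, W, sub_add_cancel]
    field_simp [ha0 x]
    ring

/-- The integral operator along characteristics is a right inverse of the transport
operator `∂ₜ + a₁∂ₓ − g`: with `α₁(x,y) = ∫ₓ^y dz/a₁(z)` and
`w(t,x) = ∫₀ˣ (v(t+α₁(x,y),y)/a₁(y)) exp(∫_y^x g(t+α₁(x,z),z)/a₁(z) dz) dy`,
if `v, g` are `C¹` and `1`-periodic in `t`, then `w` is `C¹`,
`∂ₜw + a₁(x)∂ₓw = v + g·w`, and `w(t,0) = 0`. -/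
theorem D_right_inverse_transport
    (a1 : ℝ → ℝ) (ha : Continuous a1) (ha0 : ∀ x, a1 x ≠ 0)
    (g v : ℝ → ℝ → ℝ)
    (hg : ContDiff ℝ 1 (uncurry g)) (hgper : ∀ t x, g (t + 1) x = g t x)
    (hv : ContDiff ℝ 1 (uncurry v)) (hvper : ∀ t x, v (t + 1) x = v t x)
    (w : ℝ → ℝ → ℝ)
    (hw : ∀ t x, w t x =
      ∫ y in (0:ℝ)..x, (v (t + ∫ z in x..y, (a1 z)⁻¹) y / a1 y) *
        Real.exp (∫ z in y..x, g (t + ∫ z' in x..z, (a1 z')⁻¹) z / a1 z)) :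
    ContDiff ℝ 1 (uncurry w) ∧
    (∀ t x, deriv (fun s => w s x) t + a1 x * deriv (fun y => w t y) x
      = v t x + g t x * w t x) ∧
    (∀ t, w t 0 = 0) :=
  D_right_inverse_transport_general a1 ha ha0 g v hg hv w hw
end
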